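/- Let G = (V,E) be a finite simple graph. Then the dual gauge of the positive definite monotone gauge α(G,·) is χ_f(G,·), and the dual gauge of χ_f(G,·) is α(G,·). Moreover, the antiblocker of STAB(G) is QSTAB(Ḡ), and the antiblocker of QSTAB(Ḡ) is STAB(G), where Ḡ denotes the complementary graph of G. -/

import Mathlib

open scoped BigOperators Pointwise

variable {V : Type*} [Fintype V] [DecidableEq V]

/-- Inner product on `ℝ^V`. -/
def ip (w z : V → ℝ) : ℝ := ∑ i, w i * z i

/-- `κ` is a positive definite monotone gauge on the nonnegative orthant of `ℝ^V`. -/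
def IsPDMGauge (κ : (V → ℝ) → ℝ) : Prop :=
  κ 0 = 0 ∧
  (∀ w : V → ℝ, 0 ≤ w → 0 ≤ κ w) ∧
  (∀ (c : ℝ) (w : V → ℝ), 0 < c → 0 ≤ w → κ (c • w) = c * κ w) ∧
  (∀ w z : V → ℝ, 0 ≤ w → 0 ≤ z → κ (w + z) ≤ κ w + κ z) ∧
  (∀ w : V → ℝ, 0 ≤ w → w ≠ 0 → 0 < κ w) ∧
  (∀ w z : V → ℝ, 0 ≤ w → w ≤ z → κ w ≤ κ z)

/-- The dual gauge `κ∘(z) = sup{⟨w,z⟩ : w ≥ 0, κ(w) ≤ 1}`. -/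
noncomputable def dualGauge (κ : (V → ℝ) → ℝ) (z : V → ℝ) : ℝ :=
  sSup {r : ℝ | ∃ w : V → ℝ, 0 ≤ w ∧ κ w ≤ 1 ∧ r = ip w z}

/-- The antiblocker of a subset of the nonnegative orthant. -/
def abl (X : Set (V → ℝ)) : Set (V → ℝ) := {y | 0 ≤ y ∧ ∀ x ∈ X, ip x y ≤ 1}

/-- A convex corner: compact, convex, nonempty interior, subset of the nonnegative
orthant, and lower-comprehensive. -/
def IsConvexCorner (C : Set (V → ℝ)) : Prop :=
  IsCompact C ∧ Convex ℝ C ∧ (interior C).Nonempty ∧ (∀ x ∈ C, 0 ≤ x) ∧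
  ∀ x y : V → ℝ, 0 ≤ x → x ≤ y → y ∈ C → x ∈ C

/-- Minkowski functional of a set. -/
noncomputable def minkowski (C : Set (V → ℝ)) (x : V → ℝ) : ℝ :=
  sInf {μ : ℝ | 0 ≤ μ ∧ x ∈ μ • C}

/-- Support function of a set. -/
noncomputable def suppFn (C : Set (V → ℝ)) (y : V → ℝ) : ℝ :=
  sSup {r : ℝ | ∃ x ∈ C, r = ip x y}

/-- A stable (independent) set of vertices. -/
def IsStableSet (G : SimpleGraph V) (S : Finset V) : Prop :=
  ∀ i ∈ S, ∀ j ∈ S, ¬ G.Adj i j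

/-- Weighted stability number `α(G,w)`. -/
noncomputable def alphaW (G : SimpleGraph V) (w : V → ℝ) : ℝ :=
  sSup {r : ℝ | ∃ S : Finset V, IsStableSet G S ∧ r = ∑ i ∈ S, w i}

/-- Stability number `α(G)`. -/
noncomputable def stabilityNumber (G : SimpleGraph V) : ℕ :=
  sSup {n : ℕ | ∃ S : Finset V, IsStableSet G S ∧ S.card = n}

/-- Weighted fractional chromatic number `χ_f(G,w)`. -/
noncomputable def chiF (G : SimpleGraph V) (w : V → ℝ) : ℝ :=
  sInf {r : ℝ | ∃ y : Finset V → ℝ,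
    (∀ S, 0 ≤ y S) ∧ (∀ S, ¬ IsStableSet G S → y S = 0) ∧
    (∀ i, w i ≤ ∑ S : Finset V, (if i ∈ S then y S else 0)) ∧
    r = ∑ S : Finset V, y S}

/-- The stable set polytope `STAB(G)`. -/
def STABset (G : SimpleGraph V) : Set (V → ℝ) :=
  convexHull ℝ {x : V → ℝ | ∃ S : Finset V, IsStableSet G S ∧
    x = fun i => if i ∈ S then (1 : ℝ) else 0}

/-- The fractional stable set polytope `QSTAB(G)`. -/
def QSTABset (H : SimpleGraph V) : Set (V → ℝ) :=
  {x | 0 ≤ x ∧ ∀ K : Finset V, H.IsClique (↑K : Set V) → ∑ i ∈ K, x i ≤ 1}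

/-- The set of (real) eigenvalues of a matrix. -/
def spectrumSet (M : Matrix V V ℝ) : Set ℝ :=
  {t | ∃ x : V → ℝ, x ≠ 0 ∧ M.mulVec x = t • x}

/-- Largest eigenvalue. -/
noncomputable def lambdaMax (M : Matrix V V ℝ) : ℝ := sSup (spectrumSet M)

/-- Smallest eigenvalue. -/
noncomputable def lambdaMin (M : Matrix V V ℝ) : ℝ := sInf (spectrumSet M)

/-- Positive semidefinite square root (zero on non-PSD matrices). -/
noncomputable def psdSqrt (M : Matrix V V ℝ) : Matrix V V ℝ :=
  letI := Classical.dec M.PosSemidef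
  if h : M.PosSemidef then h.1.eigenvectorUnitary.1 *
    Matrix.diagonal (fun i => Real.sqrt (h.1.eigenvalues i)) * (star h.1.eigenvectorUnitary : Matrix V V ℝ)
    else 0

/-- `Â = A / (-λ_min(A))` for nonzero `A`, and `0̂ = 0`. -/
noncomputable def hatM (A : Matrix V V ℝ) : Matrix V V ℝ :=
  if A = 0 then 0 else (-(lambdaMin A))⁻¹ • A

/-- `A` is a generalized adjacency matrix of `G`: symmetric, with `A i j = 0`
whenever `i` and `j` are non-adjacent (in particular on the diagonal). -/
def IsGenAdj (G : SimpleGraph V) (A : Matrix V V ℝ) : Prop :=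
  A.IsSymm ∧ ∀ i j, ¬ G.Adj i j → A i j = 0

/-- Weighted Hoffman bound `H(A,w) = λ_max(W^{1/2}(I+Â)W^{1/2})`, `W = Diag w`. -/
noncomputable def hoffman (A : Matrix V V ℝ) (w : V → ℝ) : ℝ :=
  lambdaMax (psdSqrt (Matrix.diagonal w) * (1 + hatM A) * psdSqrt (Matrix.diagonal w))

/-- The feasible region `𝒰_A` of the SDP defining `Υ(A,·)`. -/
def Uset (A : Matrix V V ℝ) : Set (V → ℝ) :=
  {x | 0 ≤ x ∧ ((1 : Matrix V V ℝ) -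
    psdSqrt (1 + hatM A) * Matrix.diagonal x * psdSqrt (1 + hatM A)).PosSemidef}

/-- `Υ(A,w) = max{⟨w,x⟩ : x ≥ 0, (I+Â)^{1/2} Diag(x) (I+Â)^{1/2} ⪯ I}`. -/
noncomputable def upsilon (A : Matrix V V ℝ) (w : V → ℝ) : ℝ :=
  sSup {r : ℝ | ∃ x ∈ Uset A, r = ip w x}

/-- The diagonal of a matrix, as a vector. -/
def diagVec (M : Matrix V V ℝ) : V → ℝ := fun i => M i i

/-- The convex corner `ℋ_A`. -/
def Hset (A : Matrix V V ℝ) : Set (V → ℝ) :=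
  {x | 0 ≤ x ∧ ∃ Y : Matrix V V ℝ, Y.PosSemidef ∧ Y.trace ≤ 1 ∧
    ∀ i, x i ≤ diagVec (psdSqrt (1 + hatM A) * Y * psdSqrt (1 + hatM A)) i}

/-- Objective function of Luz's convex quadratic program:
`2⟨w,x⟩ − ⟨x, W^{1/2}(I+Â)W^{1/2} x⟩`. -/
noncomputable def luzObj (A : Matrix V V ℝ) (w x : V → ℝ) : ℝ :=
  2 * ip w x - ∑ i, x i *
    ((psdSqrt (Matrix.diagonal w) * (1 + hatM A) * psdSqrt (Matrix.diagonal w)).mulVec x) i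

/-- Luz's bound `ℓ(A,w)` as a real number (supremum of the CQP objective). -/
noncomputable def luz (A : Matrix V V ℝ) (w : V → ℝ) : ℝ :=
  sSup {r : ℝ | ∃ x : V → ℝ, 0 ≤ x ∧ r = luzObj A w x}

/-- Luz's bound `ℓ(A,w)` with values in `ℝ ∪ {±∞}`. -/
noncomputable def luzE (A : Matrix V V ℝ) (w : V → ℝ) : EReal :=
  sSup {r : EReal | ∃ x : V → ℝ, 0 ≤ x ∧ r = ((luzObj A w x : ℝ) : EReal)}

/-- The theta body `TH(G)`. -/
def THbody (G : SimpleGraph V) : Set (V → ℝ) :=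
  {x | 0 ≤ x ∧ ∃ X : Matrix V V ℝ, X.PosSemidef ∧ (∀ i, X i i = x i) ∧
    (∀ i j, G.Adj i j → X i j = 0) ∧
    (Matrix.fromBlocks (1 : Matrix Unit Unit ℝ) (Matrix.of fun _ j => x j)
      (Matrix.of fun i _ => x i) X).PosSemidef}

/-- Weighted Lovász theta number `θ(G,w)`. -/
noncomputable def thetaW (G : SimpleGraph V) (w : V → ℝ) : ℝ :=
  sSup {r : ℝ | ∃ x ∈ THbody G, r = ip w x}

section AuxDuality

set_option linter.unusedSectionVars false
set_option maxHeartbeats 1000000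

/-- Incidence vector of a finset. -/
def indic (S : Finset V) : V → ℝ := fun i => if i ∈ S then 1 else 0

lemma ip_comm (w z : V → ℝ) : ip w z = ip z w := by
  unfold ip; exact Finset.sum_congr rfl fun i _ => mul_comm _ _

lemma ip_indic_left (S : Finset V) (y : V → ℝ) : ip (indic S) y = ∑ i ∈ S, y i := by
  unfold ip indic; simp [ite_mul, Finset.sum_ite_mem, Finset.univ_inter]

lemma ip_smul_right (c : ℝ) (w z : V → ℝ) : ip w (c • z) = c * ip w z := by
  unfold ip; rw [Finset.mul_sum]
  exact Finset.sum_congr rfl fun i _ => by simp; ring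

lemma ip_mono_right {w z z' : V → ℝ} (hw : 0 ≤ w) (h : z ≤ z') : ip w z ≤ ip w z' :=
  Finset.sum_le_sum fun i _ => mul_le_mul_of_nonneg_left (h i) (hw i)

lemma stable_empty (G : SimpleGraph V) : IsStableSet G ∅ := by intro i hi; simp at hi

lemma stable_singleton (G : SimpleGraph V) (i : V) : IsStableSet G {i} := by
  intro a ha b hb
  simp only [Finset.mem_singleton] at ha hb
  subst ha; subst hb; simp

lemma stable_subset (G : SimpleGraph V) {S T : Finset V} (h : T ⊆ S)
    (hS : IsStableSet G S) : IsStableSet G T := fun i hi j hj => hS i (h hi) j (h hj)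

lemma stable_iff_clique (G : SimpleGraph V) (S : Finset V) :
    IsStableSet G S ↔ Gᶜ.IsClique (↑S : Set V) := by
  constructor
  · intro h i hi j hj hij
    exact ⟨hij, h i hi j hj⟩
  · intro h i hi j hj
    by_cases hij : i = j
    · subst hij; exact G.loopless.irrefl i
    · exact (h hi hj hij).2

section lemmasG
variable (G : SimpleGraph V)

lemma alphaSet_finite (w : V → ℝ) :
    {r : ℝ | ∃ S : Finset V, IsStableSet G S ∧ r = ∑ i ∈ S, w i}.Finite := by
  have : {r : ℝ | ∃ S : Finset V, IsStableSet G S ∧ r = ∑ i ∈ S, w i} ⊆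
      (fun S : Finset V => ∑ i ∈ S, w i) '' Set.univ := by
    rintro r ⟨S, _, rfl⟩; exact ⟨S, trivial, rfl⟩
  exact Set.Finite.subset (Set.finite_univ.image _) this

lemma alphaSet_nonempty (w : V → ℝ) :
    {r : ℝ | ∃ S : Finset V, IsStableSet G S ∧ r = ∑ i ∈ S, w i}.Nonempty :=
  ⟨0, ∅, stable_empty G, by simp⟩

lemma le_alphaW {S : Finset V} (hS : IsStableSet G S) (w : V → ℝ) :
    ∑ i ∈ S, w i ≤ alphaW G w :=
  le_csSup ((alphaSet_finite G w).bddAbove) ⟨S, hS, rfl⟩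

lemma alphaW_le {w : V → ℝ} {r : ℝ}
    (h : ∀ S : Finset V, IsStableSet G S → ∑ i ∈ S, w i ≤ r) : alphaW G w ≤ r :=
  csSup_le (alphaSet_nonempty G w) (by rintro x ⟨S, hS, rfl⟩; exact h S hS)

lemma alphaW_nonneg (w : V → ℝ) : 0 ≤ alphaW G w := by
  have := le_alphaW G (stable_empty G) w; simpa using this

lemma alphaW_le_one_iff {w : V → ℝ} :
    alphaW G w ≤ 1 ↔ ∀ S : Finset V, IsStableSet G S → ∑ i ∈ S, w i ≤ 1 :=
  ⟨fun h S hS => (le_alphaW G hS w).trans h, fun h => alphaW_le G h⟩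

/-- Feasibility for the fractional cover LP. -/
def Feas (w : V → ℝ) (y : Finset V → ℝ) : Prop :=
  (∀ S, 0 ≤ y S) ∧ (∀ S, ¬ IsStableSet G S → y S = 0) ∧
    (∀ i, w i ≤ ∑ S : Finset V, (if i ∈ S then y S else 0))

lemma chiF_eq (w : V → ℝ) :
    chiF G w = sInf {r : ℝ | ∃ y : Finset V → ℝ, Feas G w y ∧ r = ∑ S : Finset V, y S} := by
  unfold chiF Feas
  congr 1; ext r; constructor
  · rintro ⟨y, h1, h2, h3, h4⟩; exact ⟨y, ⟨h1, h2, h3⟩, h4⟩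
  · rintro ⟨y, ⟨h1, h2, h3⟩, h4⟩; exact ⟨y, h1, h2, h3, h4⟩

lemma feas_singletons (w : V → ℝ) :
    Feas G w (fun S => if S.card = 1 then ∑ i ∈ S, max (w i) 0 else 0) := by
  refine ⟨fun S => ?_, fun S hS => ?_, fun i => ?_⟩
  · by_cases h : S.card = 1 <;> simp [h, Finset.sum_nonneg fun i _ => le_max_right (w i) 0]
  · by_cases h : S.card = 1
    · obtain ⟨a, rfl⟩ := Finset.card_eq_one.mp h
      exact absurd (stable_singleton G a) hS
    · simp [h]
  · calc w i ≤ max (w i) 0 := le_max_left _ _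
      _ = (if i ∈ ({i} : Finset V) then
            (if ({i} : Finset V).card = 1 then ∑ j ∈ ({i} : Finset V), max (w j) 0 else 0)
            else 0) := by simp
      _ ≤ _ := by
          apply Finset.single_le_sum (f := fun S : Finset V =>
            if i ∈ S then (if S.card = 1 then ∑ j ∈ S, max (w j) 0 else 0) else 0)
            (fun S _ => ?_) (Finset.mem_univ ({i} : Finset V))
          by_cases h1 : i ∈ S <;> by_cases h2 : S.card = 1 <;>
            simp [h1, h2, Finset.sum_nonneg fun j _ => le_max_right (w j) 0]

lemma chiSet_nonempty (w : V → ℝ) :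
    {r : ℝ | ∃ y : Finset V → ℝ, Feas G w y ∧ r = ∑ S : Finset V, y S}.Nonempty :=
  ⟨_, _, feas_singletons G w, rfl⟩

lemma chiSet_bddBelow (w : V → ℝ) :
    BddBelow {r : ℝ | ∃ y : Finset V → ℝ, Feas G w y ∧ r = ∑ S : Finset V, y S} :=
  ⟨0, by rintro r ⟨y, hy, rfl⟩; exact Finset.sum_nonneg fun S _ => hy.1 S⟩

lemma chiF_le {w : V → ℝ} {y : Finset V → ℝ} (hy : Feas G w y) :
    chiF G w ≤ ∑ S : Finset V, y S := by
  rw [chiF_eq]; exact csInf_le (chiSet_bddBelow G w) ⟨y, hy, rfl⟩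

lemma le_chiF {w : V → ℝ} {r : ℝ}
    (h : ∀ y : Finset V → ℝ, Feas G w y → r ≤ ∑ S : Finset V, y S) : r ≤ chiF G w := by
  rw [chiF_eq]
  exact le_csInf (chiSet_nonempty G w) (by rintro x ⟨y, hy, rfl⟩; exact h y hy)

lemma chiF_lt (w : V → ℝ) {c : ℝ} (hc : chiF G w < c) :
    ∃ y : Finset V → ℝ, Feas G w y ∧ ∑ S : Finset V, y S < c := by
  rw [chiF_eq] at hc
  obtain ⟨r, ⟨y, hy, rfl⟩, hr⟩ := exists_lt_of_csInf_lt (chiSet_nonempty G w) hc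
  exact ⟨y, hy, hr⟩

lemma indic_mem_STAB {S : Finset V} (hS : IsStableSet G S) : indic S ∈ STABset G :=
  subset_convexHull ℝ _ ⟨S, hS, rfl⟩

lemma zero_mem_STAB : (0 : V → ℝ) ∈ STABset G := by
  have := indic_mem_STAB G (stable_empty G)
  convert this using 1; ext i; simp [indic]

/-- Bound linear functionals on STAB by their values on generators. -/
lemma STAB_ip_le {z : V → ℝ} {c : ℝ}
    (h : ∀ S : Finset V, IsStableSet G S → ∑ i ∈ S, z i ≤ c) :
    ∀ x ∈ STABset G, ip x z ≤ c := by
  intro x hx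
  have hconv : Convex ℝ {x : V → ℝ | ip x z ≤ c} := by
    intro a ha b hb s t hs ht hst
    have heq : ip (s • a + t • b) z = s * ip a z + t * ip b z := by
      unfold ip
      rw [Finset.mul_sum, Finset.mul_sum, ← Finset.sum_add_distrib]
      exact Finset.sum_congr rfl fun i _ => by
        simp [Pi.add_apply, Pi.smul_apply, smul_eq_mul]; ring
    simp only [Set.mem_setOf_eq] at ha hb ⊢
    rw [heq]
    calc s * ip a z + t * ip b z ≤ s * c + t * c := by gcongr
      _ = c := by rw [← add_mul, hst, one_mul]
  have hsub : STABset G ⊆ {x : V → ℝ | ip x z ≤ c} := by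
    apply convexHull_min _ hconv
    rintro x ⟨S, hS, rfl⟩
    have : ip (indic S) z ≤ c := by rw [ip_indic_left]; exact h S hS
    exact this
  exact hsub hx

lemma STAB_nonneg : ∀ x ∈ STABset G, 0 ≤ x := by
  intro x hx
  have hconv : Convex ℝ {x : V → ℝ | 0 ≤ x} := by
    intro a ha b hb s t hs ht hst i
    simp only [Set.mem_setOf_eq] at ha hb
    have : (0:ℝ) ≤ s * a i + t * b i :=
      add_nonneg (mul_nonneg hs (ha i)) (mul_nonneg ht (hb i))
    simpa using this
  have hsub : STABset G ⊆ {x : V → ℝ | 0 ≤ x} := by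
    apply convexHull_min _ hconv
    rintro x ⟨S, hS, rfl⟩ i
    dsimp; positivity
  exact hsub hx

lemma STAB_isClosed : IsClosed (STABset G) := by
  have hfin : {x : V → ℝ | ∃ S : Finset V, IsStableSet G S ∧
      x = fun i => if i ∈ S then (1 : ℝ) else 0}.Finite := by
    have hsub : {x : V → ℝ | ∃ S : Finset V, IsStableSet G S ∧
        x = fun i => if i ∈ S then (1 : ℝ) else 0} ⊆
        (fun S : Finset V => fun i => if i ∈ S then (1:ℝ) else 0) '' Set.univ := by
      rintro x ⟨S, _, rfl⟩; exact ⟨S, trivial, rfl⟩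
    exact Set.Finite.subset ((Set.finite_univ).image _) hsub
  exact (hfin.isCompact_convexHull ℝ).isClosed

lemma abl_STAB : abl (STABset G) = QSTABset Gᶜ := by
  ext w
  constructor
  · rintro ⟨hw0, hw⟩
    refine ⟨hw0, fun K hK => ?_⟩
    have hS : IsStableSet G K := (stable_iff_clique G K).2 hK
    have := hw (indic K) (indic_mem_STAB G hS)
    rwa [ip_indic_left] at this
  · rintro ⟨hw0, hw⟩
    refine ⟨hw0, fun x hx => ?_⟩
    exact STAB_ip_le G (fun S hS => hw S ((stable_iff_clique G S).1 hS)) x hx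

lemma abl_QSTAB : abl (QSTABset Gᶜ) = STABset G := by
  ext y
  constructor
  · rintro ⟨hy0, hy⟩
    by_contra hnot
    obtain ⟨f, u, hfu, huy⟩ := geometric_hahn_banach_closed_point
      (convex_convexHull ℝ _) (STAB_isClosed G) hnot
    set c : V → ℝ := fun i => f (Pi.single i 1) with hc
    have hf : ∀ x : V → ℝ, f x = ip x c := by
      intro x
      have hx : x = ∑ i, x i • (Pi.single i (1:ℝ) : V → ℝ) := by
        ext j
        rw [Finset.sum_apply]
        simp [Pi.single_apply]
      conv_lhs => rw [hx]
      rw [map_sum]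
      unfold ip
      exact Finset.sum_congr rfl fun i _ => by rw [map_smul]; simp [hc]
    set cp : V → ℝ := fun i => max (c i) 0 with hcp
    have key : ∀ x ∈ STABset G, ip x cp < u := by
      intro x hx
      let L : (V → ℝ) →ₗ[ℝ] (V → ℝ) :=
        { toFun := fun x i => if 0 ≤ c i then x i else 0
          map_add' := fun a b => by ext i; by_cases h : 0 ≤ c i <;> simp [h]
          map_smul' := fun m a => by ext i; by_cases h : 0 ≤ c i <;> simp [h] }
      have hLx : L x ∈ STABset G := by
        have hsub : STABset G ⊆ L ⁻¹' (STABset G) := by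
          apply convexHull_min _ ((convex_convexHull ℝ _).linear_preimage L)
          rintro x ⟨S, hS, rfl⟩
          show L _ ∈ STABset G
          have hLeq : L (fun i => if i ∈ S then (1:ℝ) else 0) =
              indic (S.filter (fun i => 0 ≤ c i)) := by
            ext i
            simp only [L, LinearMap.coe_mk, AddHom.coe_mk, indic, Finset.mem_filter]
            by_cases h1 : 0 ≤ c i <;> by_cases h2 : i ∈ S <;> simp [h1, h2]
          rw [hLeq]
          exact indic_mem_STAB G (stable_subset G (Finset.filter_subset _ _) hS)
        exact hsub hx
      have heq : ip x cp = ip (L x) c := by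
        unfold ip
        apply Finset.sum_congr rfl
        intro i _
        simp only [L, LinearMap.coe_mk, AddHom.coe_mk, hcp]
        by_cases h : 0 ≤ c i
        · simp [h, max_eq_left h, mul_comm]
        · simp [h, max_eq_right (le_of_not_ge h)]
      rw [heq, ← hf]
      exact hfu _ hLx
    have hu_pos : 0 < u := by
      have := key 0 (zero_mem_STAB G)
      have h0 : ip 0 cp = 0 := by unfold ip; simp
      linarith
    have hwQ : (u⁻¹ • cp) ∈ QSTABset Gᶜ := by
      constructor
      · intro i
        have h1 : (0:ℝ) ≤ cp i := le_max_right _ _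
        have h2 : (0:ℝ) ≤ u⁻¹ * cp i := mul_nonneg (inv_nonneg.2 hu_pos.le) h1
        simpa using h2
      · intro K hK
        have hS : IsStableSet G K := (stable_iff_clique G K).2 hK
        have h1 : ip (indic K) cp < u := key _ (indic_mem_STAB G hS)
        rw [ip_indic_left] at h1
        have h2 : ∑ i ∈ K, (u⁻¹ • cp) i = u⁻¹ * ∑ i ∈ K, cp i := by
          rw [Finset.mul_sum]; exact Finset.sum_congr rfl fun i _ => by simp
        rw [h2, inv_mul_le_iff₀ hu_pos, mul_one]
        exact h1.le
    have hcon := hy _ hwQ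
    have h2 : ip (u⁻¹ • cp) y = u⁻¹ * ip cp y := by
      unfold ip; rw [Finset.mul_sum]
      exact Finset.sum_congr rfl fun i _ => by simp [mul_assoc]
    have h3 : u < ip cp y := by
      have h4 : f y ≤ ip cp y := by
        rw [hf y, ip_comm]
        apply Finset.sum_le_sum
        intro i _
        exact mul_le_mul_of_nonneg_right (le_max_left _ _) (hy0 i)
      linarith
    rw [h2, inv_mul_le_iff₀ hu_pos, mul_one] at hcon
    linarith
  · intro hy
    refine ⟨STAB_nonneg G y hy, fun x hx => ?_⟩
    rw [ip_comm]
    exact STAB_ip_le G (fun S hS => hx.2 S ((stable_iff_clique G S).1 hS)) y hy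

lemma feas_delta {S : Finset V} (hS : IsStableSet G S) :
    Feas G (indic S) (fun T => if T = S then 1 else 0) := by
  refine ⟨fun T => by positivity, fun T hT => ?_, fun i => ?_⟩
  · by_cases h : T = S
    · subst h; exact absurd hS hT
    · simp [h]
  · have h1 : ∑ T : Finset V, (if i ∈ T then (if T = S then (1:ℝ) else 0) else 0) =
        ∑ T : Finset V, (if T = S then (if i ∈ T then (1:ℝ) else 0) else 0) := by
      apply Finset.sum_congr rfl
      intro T _
      by_cases h1 : i ∈ T <;> by_cases h2 : T = S <;> simp [h1, h2]
    rw [h1, Finset.sum_ite_eq' Finset.univ S (fun T => if i ∈ T then (1:ℝ) else 0)]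
    simp [indic]

lemma delta_sum (S : Finset V) :
    ∑ T : Finset V, (if T = S then (1:ℝ) else 0) = 1 := by
  rw [Finset.sum_ite_eq' Finset.univ S (fun _ => (1:ℝ))]
  simp

/-- Every element of STAB admits a fractional cover of total weight at most 1. -/
lemma STAB_cover {x : V → ℝ} (hx : x ∈ STABset G) :
    ∃ y : Finset V → ℝ, Feas G x y ∧ ∑ S : Finset V, y S ≤ 1 := by
  have hconv : Convex ℝ {x : V → ℝ | ∃ y : Finset V → ℝ,
      Feas G x y ∧ ∑ S : Finset V, y S ≤ 1} := by
    rintro a ⟨ya, ⟨hya1, hya2, hya3⟩, hya4⟩ b ⟨yb, ⟨hyb1, hyb2, hyb3⟩, hyb4⟩ s t hs ht hst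
    refine ⟨fun S => s * ya S + t * yb S,
      ⟨fun S => add_nonneg (mul_nonneg hs (hya1 S)) (mul_nonneg ht (hyb1 S)),
       fun S hS => by dsimp only; rw [hya2 S hS, hyb2 S hS]; ring, fun i => ?_⟩, ?_⟩
    · have hcong : ∑ S : Finset V, (if i ∈ S then s * ya S + t * yb S else 0) =
          s * (∑ S : Finset V, if i ∈ S then ya S else 0) +
          t * (∑ S : Finset V, if i ∈ S then yb S else 0) := by
        rw [Finset.mul_sum, Finset.mul_sum, ← Finset.sum_add_distrib]
        apply Finset.sum_congr rfl
        intro S _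
        by_cases h : i ∈ S <;> simp [h]
      rw [hcong]
      have := add_le_add (mul_le_mul_of_nonneg_left (hya3 i) hs)
        (mul_le_mul_of_nonneg_left (hyb3 i) ht)
      simpa using this
    · calc ∑ S : Finset V, (s * ya S + t * yb S)
          = s * (∑ S : Finset V, ya S) + t * (∑ S : Finset V, yb S) := by
            rw [Finset.mul_sum, Finset.mul_sum, ← Finset.sum_add_distrib]
        _ ≤ s * 1 + t * 1 := add_le_add (mul_le_mul_of_nonneg_left hya4 hs)
            (mul_le_mul_of_nonneg_left hyb4 ht)
        _ = 1 := by rw [mul_one, mul_one, hst]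
  have hsub : STABset G ⊆ {x : V → ℝ | ∃ y : Finset V → ℝ,
      Feas G x y ∧ ∑ S : Finset V, y S ≤ 1} := by
    apply convexHull_min _ hconv
    rintro x ⟨S, hS, rfl⟩
    have hfd := feas_delta G hS
    refine ⟨fun T => if T = S then 1 else 0, ?_, (delta_sum S).le⟩
    have : (fun i => if i ∈ S then (1:ℝ) else 0) = indic S := rfl
    rw [this]
    exact hfd
  exact hsub hx

lemma swap_sum (w : V → ℝ) (y : Finset V → ℝ) :
    ∑ i, w i * (∑ S : Finset V, if i ∈ S then y S else 0) =
      ∑ S : Finset V, y S * ∑ i ∈ S, w i := by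
  have h1 : ∀ i, w i * (∑ S : Finset V, if i ∈ S then y S else 0) =
      ∑ S : Finset V, (if i ∈ S then w i * y S else 0) := by
    intro i
    rw [Finset.mul_sum]
    apply Finset.sum_congr rfl
    intro S _
    by_cases h : i ∈ S <;> simp [h]
  calc ∑ i, w i * (∑ S : Finset V, if i ∈ S then y S else 0)
      = ∑ i, ∑ S : Finset V, (if i ∈ S then w i * y S else 0) :=
        Finset.sum_congr rfl fun i _ => h1 i
    _ = ∑ S : Finset V, ∑ i, (if i ∈ S then w i * y S else 0) := Finset.sum_comm
    _ = ∑ S : Finset V, y S * ∑ i ∈ S, w i := by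
        apply Finset.sum_congr rfl
        intro S _
        rw [Finset.sum_ite_mem, Finset.univ_inter, Finset.mul_sum]
        exact Finset.sum_congr rfl fun i _ => mul_comm _ _

/-- Weak duality: `⟨w,z⟩ ≤ ∑ y` for `w` with `α(G,w) ≤ 1` and `y` fractional cover of `z`. -/
lemma weak_duality {w z : V → ℝ} {y : Finset V → ℝ} (hw0 : 0 ≤ w)
    (hw1 : ∀ S : Finset V, IsStableSet G S → ∑ i ∈ S, w i ≤ 1) (hy : Feas G z y) :
    ip w z ≤ ∑ S : Finset V, y S := by
  calc ip w z ≤ ip w (fun i => ∑ S : Finset V, if i ∈ S then y S else 0) :=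
        ip_mono_right hw0 (fun i => hy.2.2 i)
    _ = ∑ S : Finset V, y S * ∑ i ∈ S, w i := swap_sum w y
    _ ≤ ∑ S : Finset V, y S := by
        apply Finset.sum_le_sum
        intro S _
        by_cases hS : IsStableSet G S
        · calc y S * ∑ i ∈ S, w i ≤ y S * 1 :=
              mul_le_mul_of_nonneg_left (hw1 S hS) (hy.1 S)
            _ = y S := mul_one _
        · simp [hy.2.1 S hS]

end lemmasG

end AuxDuality

/-- `α(G,·)` and `χ_f(G,·)` are dual gauges of each other, and
`STAB(G)` and `QSTAB(Ḡ)` are antiblockers of each other. -/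
theorem alpha_chiF_duality (G : SimpleGraph V) :
    (∀ z : V → ℝ, 0 ≤ z → dualGauge (alphaW G) z = chiF G z) ∧
    (∀ z : V → ℝ, 0 ≤ z → dualGauge (chiF G) z = alphaW G z) ∧
    abl (STABset G) = QSTABset Gᶜ ∧
    abl (QSTABset Gᶜ) = STABset G := by
  have hablQ := abl_QSTAB G
  refine ⟨?_, ?_, abl_STAB G, hablQ⟩
  · -- dualGauge (alphaW G) = chiF G
    intro z hz
    unfold dualGauge
    set D : Set ℝ := {r : ℝ | ∃ w : V → ℝ, 0 ≤ w ∧ alphaW G w ≤ 1 ∧ r = ip w z} with hD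
    have hub : ∀ r ∈ D, r ≤ chiF G z := by
      rintro r ⟨w, hw0, hw1, rfl⟩
      exact le_chiF G (fun y hy => weak_duality G hw0 ((alphaW_le_one_iff G).1 hw1) hy)
    have h0D : (0:ℝ) ∈ D := by
      refine ⟨0, le_refl _, ?_, by unfold ip; simp⟩
      exact alphaW_le G (fun S _ => by simp)
    have hbdd : BddAbove D := ⟨chiF G z, fun r hr => hub r hr⟩
    have hle : sSup D ≤ chiF G z := csSup_le ⟨0, h0D⟩ hub
    have hge : chiF G z ≤ sSup D := by
      by_cases hz0 : z = 0
      · subst hz0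
        have h1 : chiF G 0 ≤ 0 := by
          have hF : Feas G 0 (fun _ => 0) :=
            ⟨fun S => le_refl _, fun S _ => rfl, fun i => by simp⟩
          have := chiF_le G hF
          simpa using this
        have h2 : (0:ℝ) ≤ sSup D := le_csSup hbdd h0D
        linarith
      · obtain ⟨i, hi⟩ : ∃ i, z i ≠ 0 := Function.ne_iff.1 hz0
        have hzi : 0 < z i := lt_of_le_of_ne (hz i) (Ne.symm hi)
        have hβi : z i ≤ sSup D := by
          apply le_csSup hbdd
          refine ⟨indic {i}, fun j => by unfold indic; positivity, ?_,
            by rw [ip_indic_left]; simp⟩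
          apply alphaW_le
          intro S hS
          have hsum : ∑ j ∈ S, indic {i} j = if i ∈ S then (1:ℝ) else 0 := by
            unfold indic
            simp only [Finset.mem_singleton]
            rw [Finset.sum_ite_eq' S i (fun _ => (1:ℝ))]
          rw [hsum]; split <;> norm_num
        have hβpos : 0 < sSup D := lt_of_lt_of_le hzi hβi
        have hmem : (sSup D)⁻¹ • z ∈ abl (QSTABset Gᶜ) := by
          constructor
          · intro j
            have : 0 ≤ (sSup D)⁻¹ * z j := mul_nonneg (inv_nonneg.2 hβpos.le) (hz j)
            simpa using this
          · intro w hw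
            rw [ip_smul_right, inv_mul_le_iff₀ hβpos, mul_one]
            apply le_csSup hbdd
            exact ⟨w, hw.1, (alphaW_le_one_iff G).2
              (fun S hS => hw.2 S ((stable_iff_clique G S).1 hS)), rfl⟩
        rw [hablQ] at hmem
        obtain ⟨y, hyF, hy1⟩ := STAB_cover G hmem
        have hfeas : Feas G z (fun S => sSup D * y S) := by
          refine ⟨fun S => mul_nonneg hβpos.le (hyF.1 S),
            fun S hS => by dsimp only; rw [hyF.2.1 S hS, mul_zero], fun j => ?_⟩
          have h1 := hyF.2.2 j
          have h2 : ((sSup D)⁻¹ • z) j = (sSup D)⁻¹ * z j := rfl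
          rw [h2] at h1
          have h3 : z j ≤ sSup D * ∑ S : Finset V, (if j ∈ S then y S else 0) := by
            calc z j = sSup D * ((sSup D)⁻¹ * z j) := by field_simp
              _ ≤ sSup D * _ := mul_le_mul_of_nonneg_left h1 hβpos.le
          calc z j ≤ sSup D * ∑ S : Finset V, (if j ∈ S then y S else 0) := h3
            _ = ∑ S : Finset V, (if j ∈ S then sSup D * y S else 0) := by
                rw [Finset.mul_sum]
                exact Finset.sum_congr rfl fun S _ => by
                  by_cases h : j ∈ S <;> simp [h]
        calc chiF G z ≤ ∑ S : Finset V, sSup D * y S := chiF_le G hfeas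
          _ = sSup D * ∑ S : Finset V, y S := by rw [Finset.mul_sum]
          _ ≤ sSup D * 1 := mul_le_mul_of_nonneg_left hy1 hβpos.le
          _ = sSup D := mul_one _
    exact le_antisymm hle hge
  · -- dualGauge (chiF G) = alphaW G
    intro z hz
    unfold dualGauge
    set E : Set ℝ := {r : ℝ | ∃ w : V → ℝ, 0 ≤ w ∧ chiF G w ≤ 1 ∧ r = ip w z} with hE
    have hub : ∀ r ∈ E, r ≤ alphaW G z := by
      rintro r ⟨w, hw0, hw1, rfl⟩
      have hkey : ∀ ε : ℝ, 0 < ε → ip w z ≤ (1 + ε) * alphaW G z := by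
        intro ε hε
        obtain ⟨y, hyF, hy⟩ := chiF_lt G w (c := 1 + ε) (by linarith)
        calc ip w z = ip z w := ip_comm w z
          _ ≤ ip z (fun i => ∑ S : Finset V, if i ∈ S then y S else 0) :=
              ip_mono_right hz (fun i => hyF.2.2 i)
          _ = ∑ S : Finset V, y S * ∑ i ∈ S, z i := by
              unfold ip; exact swap_sum z y
          _ ≤ ∑ S : Finset V, y S * alphaW G z := by
              apply Finset.sum_le_sum; intro S _
              by_cases hS : IsStableSet G S
              · exact mul_le_mul_of_nonneg_left (le_alphaW G hS z) (hyF.1 S)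
              · simp [hyF.2.1 S hS]
          _ = (∑ S : Finset V, y S) * alphaW G z := by rw [Finset.sum_mul]
          _ ≤ (1 + ε) * alphaW G z :=
              mul_le_mul_of_nonneg_right hy.le (alphaW_nonneg G z)
      by_cases ha : alphaW G z = 0
      · have h1 := hkey 1 one_pos
        rw [ha, mul_zero] at h1
        rw [ha]; exact h1
      · have hapos : 0 < alphaW G z := lt_of_le_of_ne (alphaW_nonneg G z) (Ne.symm ha)
        apply le_of_forall_pos_le_add
        intro δ hδ
        have h1 := hkey (δ / alphaW G z) (div_pos hδ hapos)
        calc ip w z ≤ (1 + δ / alphaW G z) * alphaW G z := h1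
          _ = alphaW G z + δ := by field_simp
    have h0E : (0:ℝ) ∈ E := by
      refine ⟨0, le_refl _, ?_, by unfold ip; simp⟩
      have hF : Feas G 0 (fun _ => 0) :=
        ⟨fun S => le_refl _, fun S _ => rfl, fun i => by simp⟩
      have h := chiF_le G hF
      simp only [Finset.sum_const_zero] at h
      linarith
    have hbdd : BddAbove E := ⟨alphaW G z, fun r hr => hub r hr⟩
    have hle : sSup E ≤ alphaW G z := csSup_le ⟨0, h0E⟩ hub
    have hge : alphaW G z ≤ sSup E := by
      apply alphaW_le
      intro S hS
      rw [(ip_indic_left S z).symm]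
      apply le_csSup hbdd
      refine ⟨indic S, fun j => by unfold indic; positivity, ?_, rfl⟩
      have h := chiF_le G (feas_delta G hS)
      rwa [delta_sum S] at h
    exact le_antisymm hle hge
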